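/- arXiv:1111.6185 — 2 statements merged into one kernel-verified Lean document; each statement's English description precedes it below -/
import Mathlib

section
/- For an ordered D-set partition J = (A | A^c) of [±n] with A ⊆ [n], the standardization map st_J is a bijection from S_J(q) = { λ ∈ D_{2n}(q) : every arc of λ has both endpoints in the same part of J } onto D_{2|A|}(q) × D_{2|A^c|}(q). -/
open Finset
open scoped Classical

noncomputable section

/-- A labelled arc `(i, j, a)` on `[±n]` with label `a`. -/
abbrev Arc (F : Type*) := ℤ × ℤ × F

/-- Position of `i ∈ [±n] = {1,…,n,-n,…,-1}` in the total order
`1 ≺ ⋯ ≺ n ≺ -n ≺ ⋯ ≺ -1` (so `posD n i = i` for `i > 0` and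
`posD n (-m) = 2n + 1 - m`). -/
def posD (n : ℕ) (i : ℤ) : ℤ := if 0 < i then i else 2 * n + 1 + i

/-- `λ` is a `D_{2n}(q)`-partition of `[±n]`: a set of labelled arcs `(i,j,a)` with
`i, j ∈ [±n]`, `i ≺ j`, `j ≠ -i`, `a ≠ 0`, closed under the symmetry
`(i,j,a) ↦ (-j,-i,-a)`, and such that no arc `(i,k,b)` or `(k,j,b)` with
`i ≺ k ≺ j` coexists with an arc `(i,j,a)`. -/
def IsDPartition {F : Type*} [Field F] (n : ℕ) (lam : Finset (Arc F)) : Prop :=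
  ∀ i j a, (i, j, a) ∈ lam →
    1 ≤ |i| ∧ |i| ≤ (n : ℤ) ∧ 1 ≤ |j| ∧ |j| ≤ (n : ℤ) ∧ a ≠ 0 ∧
    posD n i < posD n j ∧ j ≠ -i ∧ (-j, -i, -a) ∈ lam ∧
    ∀ k b, posD n i < posD n k → posD n k < posD n j →
      (i, k, b) ∉ lam ∧ (k, j, b) ∉ lam

/-- Rank of `i` in a finite set `A ⊆ [n]` of positive integers:
the number of elements of `A` that are `≤ i`. -/
def rankIn (A : Finset ℤ) (i : ℤ) : ℤ := ((A.filter (· ≤ i)).card : ℤ)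

/-- The standardization map `st_A : ±A → [±|A|]`, the unique order-preserving
relabelling (extended arbitrarily off `±A`). -/
def stMap (A : Finset ℤ) (i : ℤ) : ℤ := if 0 < i then rankIn A i else -(rankIn A (-i))

/-- Standardization applied to a labelled arc. -/
def stArc {F : Type*} (A : Finset ℤ) : Arc F → Arc F :=
  fun t => (stMap A t.1, stMap A t.2.1, t.2.2)

/-- `λ|_A`: the arcs of `λ` with both endpoints in `±A = A ∪ (-A)`. -/
def restrictTo {F : Type*} (A : Finset ℤ) (lam : Finset (Arc F)) : Finset (Arc F) :=
  lam.filter (fun t => |t.1| ∈ A ∧ |t.2.1| ∈ A)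

/-- Relabel all arcs of `λ` via `st_A`. -/
def standardize {F : Type*} (A : Finset ℤ) (lam : Finset (Arc F)) : Finset (Arc F) :=
  lam.image (stArc A)

/-- Every arc of `λ` has both endpoints in `±A` or both in `±Aᶜ`,
i.e. `λ = λ|_A ⊔ λ|_{Aᶜ}`. -/
def Splits {F : Type*} (A : Finset ℤ) (lam : Finset (Arc F)) : Prop :=
  ∀ t ∈ lam, (|t.1| ∈ A ↔ |t.2.1| ∈ A)

namespace StdBij

/-- Inverse of `rankIn` on `A`. -/
def unrank (A : Finset ℤ) (r : ℤ) : ℤ :=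
  if h : ∃ p ∈ A, rankIn A p = r then h.choose else 0

/-- Inverse of `stMap` on `±A`. -/
def unstMap (A : Finset ℤ) (r : ℤ) : ℤ :=
  if 0 < r then unrank A r else -(unrank A (-r))

/-- Un-standardization applied to a labelled arc. -/
def unstArc {F : Type*} (A : Finset ℤ) : Arc F → Arc F :=
  fun t => (unstMap A t.1, unstMap A t.2.1, t.2.2)

variable {A : Finset ℤ}

lemma rankIn_mono {p q : ℤ} (h : p ≤ q) : rankIn A p ≤ rankIn A q := by
  unfold rankIn
  exact_mod_cast Finset.card_le_card (fun x hx => by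
    simp only [mem_filter] at hx ⊢; exact ⟨hx.1, hx.2.trans h⟩)

lemma rankIn_strict {p q : ℤ} (hq : q ∈ A) (h : p < q) : rankIn A p < rankIn A q := by
  unfold rankIn
  have : A.filter (· ≤ p) ⊂ A.filter (· ≤ q) := by
    refine Finset.ssubset_iff_of_subset (fun x hx => by
      simp only [mem_filter] at hx ⊢; exact ⟨hx.1, hx.2.trans h.le⟩) |>.2 ?_
    exact ⟨q, by simp [hq], by simp [h.not_ge]⟩
  exact_mod_cast Finset.card_lt_card this

lemma rankIn_lt_iff {p q : ℤ} (hp : p ∈ A) (hq : q ∈ A) :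
    rankIn A p < rankIn A q ↔ p < q := by
  constructor
  · intro h
    by_contra hle
    exact absurd (rankIn_mono (not_lt.1 hle)) (not_le.2 h)
  · exact rankIn_strict hq

lemma rankIn_injOn {p q : ℤ} (hp : p ∈ A) (hq : q ∈ A) (h : rankIn A p = rankIn A q) :
    p = q := by
  rcases lt_trichotomy p q with h1 | h1 | h1
  · exact absurd h (rankIn_strict hq h1).ne
  · exact h1
  · exact absurd h.symm (rankIn_strict hp h1).ne

lemma rankIn_mem_Icc {p : ℤ} (hp : p ∈ A) : rankIn A p ∈ Icc 1 (A.card : ℤ) := by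
  simp only [mem_Icc]
  constructor
  · unfold rankIn
    have : (A.filter (· ≤ p)).Nonempty := ⟨p, by simp [hp]⟩
    have := Finset.card_pos.2 this
    exact_mod_cast this
  · unfold rankIn
    exact_mod_cast Finset.card_le_card (filter_subset _ _)

lemma image_rankIn : A.image (rankIn A) = Icc 1 (A.card : ℤ) := by
  apply Finset.eq_of_subset_of_card_le
  · intro r hr
    obtain ⟨p, hp, rfl⟩ := mem_image.1 hr
    exact rankIn_mem_Icc hp
  · rw [Finset.card_image_of_injOn (fun p hp q hq => rankIn_injOn hp hq)]
    have : (Icc 1 (A.card : ℤ)).card = A.card := by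
      rw [Int.card_Icc]; omega
    omega

lemma unrank_spec {r : ℤ} (hr : r ∈ Icc 1 (A.card : ℤ)) :
    unrank A r ∈ A ∧ rankIn A (unrank A r) = r := by
  rw [← image_rankIn, mem_image] at hr
  have h : ∃ p ∈ A, rankIn A p = r := by
    obtain ⟨p, hp, hpr⟩ := hr; exact ⟨p, hp, hpr⟩
  rw [unrank, dif_pos h]
  exact ⟨h.choose_spec.1, h.choose_spec.2⟩

lemma unrank_rankIn {p : ℤ} (hp : p ∈ A) : unrank A (rankIn A p) = p := by
  have h := unrank_spec (rankIn_mem_Icc hp)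
  exact rankIn_injOn h.1 hp h.2

end StdBij
namespace StdBij

variable {A : Finset ℤ}

lemma abs_pos_of_mem (hpos : ∀ p ∈ A, 0 < p) {i : ℤ} (hi : |i| ∈ A) : i ≠ 0 := by
  intro h; subst h; simpa using hpos 0 (by simpa using hi)

lemma stMap_pos_of_pos {i : ℤ} (hi : |i| ∈ A) (h : 0 < i) : stMap A i = rankIn A i := by
  rw [stMap, if_pos h]

lemma stMap_neg (i : ℤ) (hi : i ≠ 0) : stMap A (-i) = -stMap A i := by
  rcases lt_trichotomy i 0 with h | h | h
  · rw [stMap, if_pos (by omega), stMap, if_neg (by omega), neg_neg]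
  · omega
  · rw [stMap, if_neg (by omega), stMap, if_pos h, neg_neg]

lemma stMap_spec (hpos : ∀ p ∈ A, 0 < p) {i : ℤ} (hi : |i| ∈ A) :
    |stMap A i| = rankIn A |i| ∧ (0 < i ↔ 0 < stMap A i) := by
  have hi0 : i ≠ 0 := abs_pos_of_mem hpos hi
  have hrk : rankIn A |i| ∈ Icc 1 (A.card : ℤ) := rankIn_mem_Icc hi
  simp only [mem_Icc] at hrk
  rcases lt_trichotomy i 0 with h | h | h
  · rw [stMap, if_neg (by omega)]
    rw [abs_of_neg h] at hrk ⊢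
    constructor
    · rw [abs_of_neg (by omega)]; ring
    · constructor <;> intro <;> omega
  · omega
  · rw [stMap, if_pos h, abs_of_pos h] at *
    exact ⟨(abs_of_pos (by omega)), by constructor <;> intro <;> omega⟩

lemma unst_st (hpos : ∀ p ∈ A, 0 < p) {i : ℤ} (hi : |i| ∈ A) :
    unstMap A (stMap A i) = i := by
  have hi0 : i ≠ 0 := abs_pos_of_mem hpos hi
  rcases lt_trichotomy i 0 with h | h | h
  · have hmem : -i ∈ A := by rwa [abs_of_neg h] at hi
    have hrk : rankIn A (-i) ∈ Icc 1 (A.card : ℤ) := rankIn_mem_Icc hmem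
    simp only [mem_Icc] at hrk
    rw [stMap, if_neg (by omega), unstMap, if_neg (by omega), neg_neg,
      unrank_rankIn hmem]
    ring
  · omega
  · have hmem : i ∈ A := by rwa [abs_of_pos h] at hi
    have hrk : rankIn A i ∈ Icc 1 (A.card : ℤ) := rankIn_mem_Icc hmem
    simp only [mem_Icc] at hrk
    rw [stMap, if_pos h, unstMap, if_pos (by omega), unrank_rankIn hmem]

lemma st_inj (hpos : ∀ p ∈ A, 0 < p) {i j : ℤ} (hi : |i| ∈ A) (hj : |j| ∈ A)
    (h : stMap A i = stMap A j) : i = j := by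
  rw [← unst_st hpos hi, ← unst_st hpos hj, h]

lemma st_unst (hpos : ∀ p ∈ A, 0 < p) {r : ℤ} (hr : |r| ∈ Icc 1 (A.card : ℤ)) :
    stMap A (unstMap A r) = r ∧ |unstMap A r| ∈ A := by
  simp only [mem_Icc] at hr
  rcases lt_trichotomy r 0 with h | h | h
  · rw [abs_of_neg h] at hr
    have hs := unrank_spec (A := A) (r := -r) (by simp [mem_Icc]; omega)
    have hp : 0 < unrank A (-r) := hpos _ hs.1
    rw [unstMap, if_neg (by omega)]
    constructor
    · rw [stMap, if_neg (by omega), neg_neg, hs.2]; ring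
    · rw [abs_of_neg (by omega), neg_neg]; exact hs.1
  · subst h; simp at hr
  · rw [abs_of_pos h] at hr
    have hs := unrank_spec (A := A) (r := r) (by simp [mem_Icc]; omega)
    have hp : 0 < unrank A r := hpos _ hs.1
    rw [unstMap, if_pos h]
    exact ⟨by rw [stMap, if_pos hp, hs.2], by rw [abs_of_pos hp]; exact hs.1⟩

lemma unst_neg (hpos : ∀ p ∈ A, 0 < p) {r : ℤ} (hr : |r| ∈ Icc 1 (A.card : ℤ)) :
    unstMap A (-r) = -unstMap A r := by
  have h := st_unst hpos hr
  have h2 : |(-r)| ∈ Icc 1 (A.card : ℤ) := by rwa [abs_neg]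
  have h3 := st_unst hpos h2
  apply st_inj hpos h3.2 (by rw [abs_neg]; exact h.2)
  rw [h3.1, stMap_neg _ (abs_pos_of_mem hpos h.2), h.1]

end StdBij
namespace StdBij

variable {A : Finset ℤ}

lemma posD_lt_iff_of_signs {n : ℕ} {i j : ℤ} (hi : 1 ≤ |i| ∧ |i| ≤ (n : ℤ))
    (hj : 1 ≤ |j| ∧ |j| ≤ (n : ℤ)) :
    posD n i < posD n j ↔
      ((0 < i ∧ 0 < j ∧ i < j) ∨ (0 < i ∧ j < 0) ∨ (i < 0 ∧ j < 0 ∧ i < j)) := by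
  have hi0 : i ≠ 0 := by rintro rfl; simp at hi
  have hj0 : j ≠ 0 := by rintro rfl; simp at hj
  rcases hi0.lt_or_gt with h1 | h1 <;> rcases hj0.lt_or_gt with h2 | h2
  · rw [abs_of_neg h1] at hi; rw [abs_of_neg h2] at hj
    rw [posD, posD, if_neg (by omega), if_neg (by omega)]
    constructor <;> intro <;> omega
  · rw [abs_of_neg h1] at hi; rw [abs_of_pos h2] at hj
    rw [posD, posD, if_neg (by omega), if_pos h2]
    constructor <;> intro <;> omega
  · rw [abs_of_pos h1] at hi; rw [abs_of_neg h2] at hj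
    rw [posD, posD, if_pos h1, if_neg (by omega)]
    constructor <;> intro <;> omega
  · rw [abs_of_pos h1] at hi; rw [abs_of_pos h2] at hj
    rw [posD, posD, if_pos h1, if_pos h2]
    constructor <;> intro <;> omega

lemma abs_bounds_of_mem {n : ℕ} (hA : A ⊆ Icc 1 (n : ℤ)) {i : ℤ} (hi : |i| ∈ A) :
    1 ≤ |i| ∧ |i| ≤ (n : ℤ) := by
  have := hA hi; simp only [mem_Icc] at this; exact this

lemma hpos_of_subset {n : ℕ} (hA : A ⊆ Icc 1 (n : ℤ)) : ∀ p ∈ A, 0 < p := by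
  intro p hp; have := hA hp; simp only [mem_Icc] at this; omega

lemma st_posD_lt {n : ℕ} (hA : A ⊆ Icc 1 (n : ℤ)) {i j : ℤ} (hi : |i| ∈ A)
    (hj : |j| ∈ A) :
    posD A.card (stMap A i) < posD A.card (stMap A j) ↔ posD n i < posD n j := by
  have hpos := hpos_of_subset hA
  have hi0 : i ≠ 0 := abs_pos_of_mem hpos hi
  have hj0 : j ≠ 0 := abs_pos_of_mem hpos hj
  have hbi := abs_bounds_of_mem hA hi
  have hbj := abs_bounds_of_mem hA hj
  have hri := rankIn_mem_Icc hi
  have hrj := rankIn_mem_Icc hj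
  simp only [mem_Icc] at hri hrj
  have hsbi : 1 ≤ |stMap A i| ∧ |stMap A i| ≤ (A.card : ℤ) := by
    rw [(stMap_spec hpos hi).1]; exact hri
  have hsbj : 1 ≤ |stMap A j| ∧ |stMap A j| ≤ (A.card : ℤ) := by
    rw [(stMap_spec hpos hj).1]; exact hrj
  rw [posD_lt_iff_of_signs hbi hbj, posD_lt_iff_of_signs hsbi hsbj]
  rcases hi0.lt_or_gt with h1 | h1 <;> rcases hj0.lt_or_gt with h2 | h2
  · have hiA : -i ∈ A := by rwa [abs_of_neg h1] at hi
    have hjA : -j ∈ A := by rwa [abs_of_neg h2] at hj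
    have ei : stMap A i = -(rankIn A (-i)) := by rw [stMap, if_neg (by omega)]
    have ej : stMap A j = -(rankIn A (-j)) := by rw [stMap, if_neg (by omega)]
    have hlt : rankIn A (-j) < rankIn A (-i) ↔ -j < -i := rankIn_lt_iff hjA hiA
    rw [abs_of_neg h1] at hri
    rw [abs_of_neg h2] at hrj
    rw [ei, ej]
    omega
  · have ei : stMap A i = -(rankIn A (-i)) := by rw [stMap, if_neg (by omega)]
    have ej : stMap A j = rankIn A j := by rw [stMap, if_pos h2]
    rw [abs_of_neg h1] at hri
    rw [abs_of_pos h2] at hrj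
    rw [ei, ej]
    omega
  · have ei : stMap A i = rankIn A i := by rw [stMap, if_pos h1]
    have ej : stMap A j = -(rankIn A (-j)) := by rw [stMap, if_neg (by omega)]
    rw [abs_of_pos h1] at hri
    rw [abs_of_neg h2] at hrj
    rw [ei, ej]
    omega
  · have hiA : i ∈ A := by rwa [abs_of_pos h1] at hi
    have hjA : j ∈ A := by rwa [abs_of_pos h2] at hj
    have ei : stMap A i = rankIn A i := by rw [stMap, if_pos h1]
    have ej : stMap A j = rankIn A j := by rw [stMap, if_pos h2]
    have hlt : rankIn A i < rankIn A j ↔ i < j := rankIn_lt_iff hiA hjA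
    rw [abs_of_pos h1] at hri
    rw [abs_of_pos h2] at hrj
    rw [ei, ej]
    omega

end StdBij
namespace StdBij

variable {A : Finset ℤ} {F : Type*} [Field F]

lemma mem_standardize_restrict {lam : Finset (Arc F)} {t : Arc F} :
    t ∈ standardize A (restrictTo A lam) ↔
      ∃ s, s ∈ lam ∧ |s.1| ∈ A ∧ |s.2.1| ∈ A ∧ stArc A s = t := by
  simp only [standardize, restrictTo, mem_image, mem_filter]
  constructor
  · rintro ⟨s, ⟨h1, h2, h3⟩, h4⟩; exact ⟨s, h1, h2, h3, h4⟩
  · rintro ⟨s, h1, h2, h3, h4⟩; exact ⟨s, ⟨h1, h2, h3⟩, h4⟩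

lemma mapsTo_part {n : ℕ} (hA : A ⊆ Icc 1 (n : ℤ)) {lam : Finset (Arc F)}
    (hlam : IsDPartition n lam) :
    IsDPartition A.card (standardize A (restrictTo A lam)) := by
  have hpos := hpos_of_subset hA
  intro i' j' a h
  obtain ⟨⟨i, j, a₀⟩, hmem, hiA, hjA, heq⟩ := mem_standardize_restrict.1 h
  simp only [stArc, Prod.mk.injEq] at heq
  obtain ⟨rfl, rfl, rfl⟩ := heq
  simp only at hiA hjA
  obtain ⟨hb1, hb2, hb3, hb4, ha, hord, hne, hsym, hnest⟩ := hlam i j a₀ hmem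
  have hri := rankIn_mem_Icc hiA
  have hrj := rankIn_mem_Icc hjA
  simp only [mem_Icc] at hri hrj
  have hsi := (stMap_spec hpos hiA).1
  have hsj := (stMap_spec hpos hjA).1
  have hi0 : i ≠ 0 := abs_pos_of_mem hpos hiA
  refine ⟨by omega, by omega, by omega, by omega, ha, ?_, ?_, ?_, ?_⟩
  · exact (st_posD_lt hA hiA hjA).2 hord
  · intro hc
    apply hne
    rw [← stMap_neg i hi0] at hc
    exact st_inj hpos hjA (by rwa [abs_neg]) hc
  · refine mem_standardize_restrict.2 ⟨(-j, -i, -a₀), hsym, by simpa using hjA,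
      by simpa using hiA, ?_⟩
    simp only [stArc]
    rw [stMap_neg i hi0, stMap_neg j (abs_pos_of_mem hpos hjA)]
  · intro k' b h1 h2
    constructor
    · intro hc
      obtain ⟨⟨i₁, k, b₀⟩, hmem₁, hi₁A, hkA, heq₁⟩ := mem_standardize_restrict.1 hc
      simp only [stArc, Prod.mk.injEq] at heq₁
      obtain ⟨hei, hek, rfl⟩ := heq₁
      simp only at hi₁A hkA
      have : i₁ = i := st_inj hpos hi₁A hiA hei
      subst this
      rw [← hek] at h1 h2
      exact (hnest k b₀ ((st_posD_lt hA hi₁A hkA).1 h1)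
        ((st_posD_lt hA hkA hjA).1 h2)).1 hmem₁
    · intro hc
      obtain ⟨⟨k, j₁, b₀⟩, hmem₁, hkA, hj₁A, heq₁⟩ := mem_standardize_restrict.1 hc
      simp only [stArc, Prod.mk.injEq] at heq₁
      obtain ⟨hek, hej, rfl⟩ := heq₁
      simp only at hkA hj₁A
      have : j₁ = j := st_inj hpos hj₁A hjA hej
      subst this
      rw [← hek] at h1 h2
      exact (hnest k b₀ ((st_posD_lt hA hiA hkA).1 h1)
        ((st_posD_lt hA hkA hj₁A).1 h2)).2 hmem₁

end StdBij
namespace StdBij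

variable {A B : Finset ℤ} {F : Type*} [Field F]

lemma unst_abs_mem (hpos : ∀ p ∈ A, 0 < p) {r : ℤ} (hr1 : 1 ≤ |r|)
    (hr2 : |r| ≤ (A.card : ℤ)) : |unstMap A r| ∈ A :=
  (st_unst hpos (by simp only [mem_Icc]; exact ⟨hr1, hr2⟩)).2

lemma st_unst' (hpos : ∀ p ∈ A, 0 < p) {r : ℤ} (hr1 : 1 ≤ |r|)
    (hr2 : |r| ≤ (A.card : ℤ)) : stMap A (unstMap A r) = r :=
  (st_unst hpos (by simp only [mem_Icc]; exact ⟨hr1, hr2⟩)).1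

/-- Arcs of `μ` transported by `unstMap A`, inside the union with the
transported `ν`, satisfy all the `D`-partition conditions. -/
lemma glam_arc {n : ℕ} (hA : A ⊆ Icc 1 (n : ℤ)) (hB : B ⊆ Icc 1 (n : ℤ))
    (hd : Disjoint A B) {μ ν : Finset (Arc F)}
    (hμ : IsDPartition A.card μ) (hν : IsDPartition B.card ν)
    {i j : ℤ} {a : F} (h : (i, j, a) ∈ μ.image (unstArc A)) :
    1 ≤ |i| ∧ |i| ≤ (n : ℤ) ∧ 1 ≤ |j| ∧ |j| ≤ (n : ℤ) ∧ a ≠ 0 ∧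
    posD n i < posD n j ∧ j ≠ -i ∧
    (-j, -i, -a) ∈ μ.image (unstArc A) ∧
    ∀ k b, posD n i < posD n k → posD n k < posD n j →
      (i, k, b) ∉ μ.image (unstArc A) ∪ ν.image (unstArc B) ∧
      (k, j, b) ∉ μ.image (unstArc A) ∪ ν.image (unstArc B) := by
  have hpos := hpos_of_subset hA
  have hposB := hpos_of_subset hB
  obtain ⟨⟨r, s, a₀⟩, hmem, heq⟩ := mem_image.1 h
  simp only [unstArc, Prod.mk.injEq] at heq
  obtain ⟨rfl, rfl, rfl⟩ := heq
  obtain ⟨hb1, hb2, hb3, hb4, ha, hord, hne, hsym, hnest⟩ := hμ r s a₀ hmem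
  have hiA : |unstMap A r| ∈ A := unst_abs_mem hpos hb1 hb2
  have hjA : |unstMap A s| ∈ A := unst_abs_mem hpos hb3 hb4
  have hir : stMap A (unstMap A r) = r := st_unst' hpos hb1 hb2
  have hjs : stMap A (unstMap A s) = s := st_unst' hpos hb3 hb4
  have hbi := abs_bounds_of_mem hA hiA
  have hbj := abs_bounds_of_mem hA hjA
  refine ⟨hbi.1, hbi.2, hbj.1, hbj.2, ha, ?_, ?_, ?_, ?_⟩
  · rw [← st_posD_lt hA hiA hjA, hir, hjs]; exact hord
  · intro hc
    apply hne
    rw [← hjs, ← hir, ← stMap_neg _ (abs_pos_of_mem hpos hiA), ← hc]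
  · refine mem_image.2 ⟨(-s, -r, -a₀), hsym, ?_⟩
    simp only [unstArc, Prod.mk.injEq]
    refine ⟨?_, ?_, trivial⟩ <;> rw [unst_neg hpos (by simp only [mem_Icc]; omega)]
  · intro k b h1 h2
    constructor
    · intro hc
      rcases mem_union.1 hc with hc | hc
      · obtain ⟨⟨r₁, k₀, b₀⟩, hmem₁, heq₁⟩ := mem_image.1 hc
        simp only [unstArc, Prod.mk.injEq] at heq₁
        obtain ⟨he1, he2, rfl⟩ := heq₁
        obtain ⟨hc1, hc2, hc3, hc4, _, _, _, _, _⟩ := hμ r₁ k₀ b₀ hmem₁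
        have hr₁ : stMap A (unstMap A r₁) = r₁ := st_unst' hpos hc1 hc2
        have hk₀ : stMap A (unstMap A k₀) = k₀ := st_unst' hpos hc3 hc4
        have hkA : |unstMap A k₀| ∈ A := unst_abs_mem hpos hc3 hc4
        have : r₁ = r := by rw [← hr₁, ← hir, he1]
        subst this
        rw [← he2] at h1 h2
        refine (hnest k₀ b₀ ?_ ?_).1 hmem₁
        · rw [← hr₁, ← hk₀]; rw [he1] at hiA ⊢; exact (st_posD_lt hA hiA hkA).2 h1
        · rw [← hk₀, ← hjs]; exact (st_posD_lt hA hkA hjA).2 h2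
      · obtain ⟨⟨r₁, k₀, b₀⟩, hmem₁, heq₁⟩ := mem_image.1 hc
        simp only [unstArc, Prod.mk.injEq] at heq₁
        obtain ⟨he1, he2, rfl⟩ := heq₁
        obtain ⟨hc1, hc2, _, _, _, _, _, _, _⟩ := hν r₁ k₀ b₀ hmem₁
        have : |unstMap B r₁| ∈ B := unst_abs_mem hposB hc1 hc2
        rw [he1] at this
        exact (Finset.disjoint_left.1 hd hiA) this
    · intro hc
      rcases mem_union.1 hc with hc | hc
      · obtain ⟨⟨k₀, s₁, b₀⟩, hmem₁, heq₁⟩ := mem_image.1 hc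
        simp only [unstArc, Prod.mk.injEq] at heq₁
        obtain ⟨he1, he2, rfl⟩ := heq₁
        obtain ⟨hc1, hc2, hc3, hc4, _, _, _, _, _⟩ := hμ k₀ s₁ b₀ hmem₁
        have hs₁ : stMap A (unstMap A s₁) = s₁ := st_unst' hpos hc3 hc4
        have hk₀ : stMap A (unstMap A k₀) = k₀ := st_unst' hpos hc1 hc2
        have hkA : |unstMap A k₀| ∈ A := unst_abs_mem hpos hc1 hc2
        have : s₁ = s := by rw [← hs₁, ← hjs, he2]
        subst this
        rw [← he1] at h1 h2
        refine (hnest k₀ b₀ ?_ ?_).2 hmem₁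
        · rw [← hir, ← hk₀]; exact (st_posD_lt hA hiA hkA).2 h1
        · rw [← hk₀, ← hs₁]; rw [he2] at hjA ⊢; exact (st_posD_lt hA hkA hjA).2 h2
      · obtain ⟨⟨k₀, s₁, b₀⟩, hmem₁, heq₁⟩ := mem_image.1 hc
        simp only [unstArc, Prod.mk.injEq] at heq₁
        obtain ⟨he1, he2, rfl⟩ := heq₁
        obtain ⟨_, _, hc3, hc4, _, _, _, _, _⟩ := hν k₀ s₁ b₀ hmem₁
        have : |unstMap B s₁| ∈ B := unst_abs_mem hposB hc3 hc4
        rw [he2] at this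
        exact (Finset.disjoint_left.1 hd hjA) this

lemma glam_isD {n : ℕ} (hA : A ⊆ Icc 1 (n : ℤ)) (hB : B ⊆ Icc 1 (n : ℤ))
    (hd : Disjoint A B) {μ ν : Finset (Arc F)}
    (hμ : IsDPartition A.card μ) (hν : IsDPartition B.card ν) :
    IsDPartition n (μ.image (unstArc A) ∪ ν.image (unstArc B)) := by
  intro i j a h
  rcases mem_union.1 h with h | h
  · obtain ⟨hb1, hb2, hb3, hb4, ha, hord, hne, hsym, hnest⟩ := glam_arc hA hB hd hμ hν h
    exact ⟨hb1, hb2, hb3, hb4, ha, hord, hne, mem_union_left _ hsym, hnest⟩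
  · obtain ⟨hb1, hb2, hb3, hb4, ha, hord, hne, hsym, hnest⟩ :=
      glam_arc hB hA hd.symm hν hμ h
    refine ⟨hb1, hb2, hb3, hb4, ha, hord, hne, mem_union_right _ hsym, ?_⟩
    intro k b h1 h2
    have := hnest k b h1 h2
    rw [union_comm]
    exact this

end StdBij
namespace StdBij

variable {A B : Finset ℤ} {F : Type*} [Field F]

lemma abs_mem_of_image_unst (hpos : ∀ p ∈ A, 0 < p) {μ : Finset (Arc F)}
    (hμ : IsDPartition A.card μ) :
    ∀ t ∈ μ.image (unstArc A), |t.1| ∈ A ∧ |t.2.1| ∈ A := by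
  rintro t ht
  obtain ⟨⟨r, s, a⟩, hmem, rfl⟩ := mem_image.1 ht
  obtain ⟨h1, h2, h3, h4, _⟩ := hμ r s a hmem
  exact ⟨unst_abs_mem hpos h1 h2, unst_abs_mem hpos h3 h4⟩

lemma standardize_image_unst (hpos : ∀ p ∈ A, 0 < p) {μ : Finset (Arc F)}
    (hμ : IsDPartition A.card μ) :
    standardize A (μ.image (unstArc A)) = μ := by
  rw [standardize, Finset.image_image]
  rw [show μ = μ.image id from (Finset.image_id).symm]
  rw [Finset.image_image]
  apply Finset.image_congr
  rintro ⟨r, s, a⟩ hmem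
  obtain ⟨h1, h2, h3, h4, _⟩ := hμ r s a hmem
  simp only [Function.comp_apply, stArc, unstArc, id_eq]
  exact Prod.ext (st_unst' hpos h1 h2) (Prod.ext (st_unst' hpos h3 h4) rfl)

lemma image_unst_standardize (hpos : ∀ p ∈ A, 0 < p) {s : Finset (Arc F)}
    (h : ∀ t ∈ s, |t.1| ∈ A ∧ |t.2.1| ∈ A) :
    (standardize A s).image (unstArc A) = s := by
  rw [standardize, Finset.image_image]
  nth_rewrite 2 [show s = s.image id from (Finset.image_id).symm]
  apply Finset.image_congr
  rintro ⟨i, j, a⟩ hmem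
  obtain ⟨h1, h2⟩ := h _ hmem
  simp only at h1 h2
  simp only [Function.comp_apply, unstArc, stArc, id_eq]
  exact Prod.ext (unst_st hpos h1) (Prod.ext (unst_st hpos h2) rfl)

lemma restrict_of_all {s : Finset (Arc F)} (h : ∀ t ∈ s, |t.1| ∈ A ∧ |t.2.1| ∈ A) :
    restrictTo A s = s := Finset.filter_true_of_mem h

lemma restrict_of_none {s : Finset (Arc F)} (h : ∀ t ∈ s, |t.1| ∉ A) :
    restrictTo A s = ∅ :=
  Finset.filter_false_of_mem (fun t ht hc => h t ht hc.1)

lemma restrict_union (s t : Finset (Arc F)) :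
    restrictTo A (s ∪ t) = restrictTo A s ∪ restrictTo A t :=
  Finset.filter_union _ _ _

lemma restrict_decomp {n : ℕ} (hA : A ⊆ Icc 1 (n : ℤ)) {lam : Finset (Arc F)}
    (hlam : IsDPartition n lam) (hsp : Splits A lam) :
    restrictTo A lam ∪ restrictTo (Icc 1 (n : ℤ) \ A) lam = lam := by
  ext t
  simp only [mem_union, restrictTo, mem_filter, mem_sdiff, mem_Icc]
  constructor
  · rintro (⟨h, _⟩ | ⟨h, _⟩) <;> exact h
  · intro ht
    obtain ⟨i, j, a⟩ := t
    obtain ⟨h1, h2, h3, h4, _⟩ := hlam i j a ht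
    have hiff := hsp _ ht
    simp only at hiff ⊢
    by_cases hc : |i| ∈ A
    · exact Or.inl ⟨ht, hc, hiff.1 hc⟩
    · exact Or.inr ⟨ht, ⟨⟨h1, h2⟩, hc⟩, ⟨h3, h4⟩, fun hj => hc (hiff.2 hj)⟩

lemma splits_glam {n : ℕ} (hA : A ⊆ Icc 1 (n : ℤ)) (hB : B ⊆ Icc 1 (n : ℤ))
    (hd : Disjoint A B) {μ ν : Finset (Arc F)}
    (hμ : IsDPartition A.card μ) (hν : IsDPartition B.card ν) :
    Splits A (μ.image (unstArc A) ∪ ν.image (unstArc B)) := by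
  intro t ht
  rcases mem_union.1 ht with h | h
  · have := abs_mem_of_image_unst (hpos_of_subset hA) hμ t h
    exact ⟨fun _ => this.2, fun _ => this.1⟩
  · have := abs_mem_of_image_unst (hpos_of_subset hB) hν t h
    constructor <;> intro hc <;>
      exact absurd hc (Finset.disjoint_right.1 hd (by tauto))

end StdBij

open StdBij

/-- for an ordered `D`-set partition `J = (A | Aᶜ)` of `[±n]` with
`A ⊆ [n]`, the standardization map `st_J` is a bijection from
`S_J(q) = {λ ∈ D_{2n}(q) : every arc of λ has both endpoints in the same part of J}`
onto `D_{2|A|}(q) × D_{2|Aᶜ|}(q)`. -/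
theorem standardization_bijection {F : Type*} [Field F] (n : ℕ)
    (A : Finset ℤ) (hA : A ⊆ Icc 1 (n : ℤ)) :
    Set.BijOn
      (fun lam : Finset (Arc F) =>
        (standardize A (restrictTo A lam),
         standardize (Icc 1 (n : ℤ) \ A) (restrictTo (Icc 1 (n : ℤ) \ A) lam)))
      {lam | IsDPartition n lam ∧ Splits A lam}
      {p | IsDPartition A.card p.1 ∧ IsDPartition (n - A.card) p.2} := by
  set B := Icc 1 (n : ℤ) \ A with hBdef
  have hB : B ⊆ Icc 1 (n : ℤ) := sdiff_subset
  have hd : Disjoint A B := disjoint_sdiff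
  have hcard : B.card = n - A.card := by
    rw [hBdef, card_sdiff_of_subset hA, Int.card_Icc]
    omega
  have hposA := hpos_of_subset hA
  have hposB := hpos_of_subset hB
  refine Set.InvOn.bijOn (f' := fun p : Finset (Arc F) × Finset (Arc F) =>
      p.1.image (unstArc A) ∪ p.2.image (unstArc B)) ⟨?_, ?_⟩ ?_ ?_
  · -- left inverse
    rintro lam ⟨hD, hsp⟩
    simp only
    rw [image_unst_standardize hposA (fun t ht => by rw [restrictTo, mem_filter] at ht; exact ht.2),
      image_unst_standardize hposB (fun t ht => by rw [restrictTo, mem_filter] at ht; exact ht.2),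
      restrict_decomp hA hD hsp]
  · -- right inverse
    rintro ⟨μ, ν⟩ ⟨h1, h2⟩
    simp only at h1 h2 ⊢
    have hν : IsDPartition B.card ν := by rw [hcard]; exact h2
    have hμmem := abs_mem_of_image_unst (F := F) hposA h1
    have hνmem := abs_mem_of_image_unst (F := F) hposB hν
    rw [restrict_union, restrict_union,
      restrict_of_all hμmem,
      restrict_of_none (fun t ht => Finset.disjoint_right.1 hd (hνmem t ht).1),
      restrict_of_all hνmem,
      restrict_of_none (fun t ht => Finset.disjoint_left.1 hd (hμmem t ht).1),
      union_empty, empty_union,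
      standardize_image_unst hposA h1, standardize_image_unst hposB hν]
  · -- maps to
    rintro lam ⟨hD, _⟩
    refine ⟨mapsTo_part hA hD, ?_⟩
    have := mapsTo_part hB hD
    rwa [hcard] at this
  · -- inverse maps to
    rintro ⟨μ, ν⟩ ⟨h1, h2⟩
    simp only at h1 h2
    have hν : IsDPartition B.card ν := by rw [hcard]; exact h2
    exact ⟨glam_isD hA hB hd h1 hν, splits_glam hA hB hd h1 hν⟩
end
end

section
/- Define the coproduct on the P-basis by Δ(P_λ) = Σ P_{st_A(λ|_A)} ⊗ P_{st_{A^c}(λ|_{A^c})}, summing over all A ⊆ [n] such that λ = λ|_A ⊔ λ|_{A^c} (i.e., every arc of λ has both endpoints in ±A or both in ±A^c). Then Δ is coassociative: (Δ ⊗ id) ∘ Δ = (id ⊗ Δ) ∘ Δ on SC^D. -/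
open Finset
open scoped Classical

noncomputable section

variable (F : Type*) [Field F] [Fintype F]

/-- All possible labelled arcs on `[±n]`. -/
def allArcs (n : ℕ) : Finset (Arc F) :=
  Icc (-(n : ℤ)) (n : ℤ) ×ˢ Icc (-(n : ℤ)) (n : ℤ) ×ˢ (Finset.univ : Finset F)

/-- `SC^D = ⊕_{n ≥ 0} SC^D_{2n}`: the free graded `ℂ`-vector space with basis
`{κ_λ : λ ∈ D_{2n}(q), n ≥ 0}`. -/
abbrev SCtot := (Σ n : ℕ, {lam : Finset (Arc F) // IsDPartition n lam}) →₀ ℂ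

/-- `P_λ = Σ_{μ ≥ λ} κ_μ ∈ SC^D_{2n}`, where `μ` runs over the `D_{2n}(q)`-partitions
whose arc set contains the arc set of `λ`. -/
def Pelt (n : ℕ) (lam : Finset (Arc F)) : SCtot F :=
  ∑ mu ∈ (allArcs F n).powerset,
    if h : IsDPartition n mu ∧ lam ⊆ mu then
      Finsupp.single ⟨n, ⟨mu, h.1⟩⟩ (1 : ℂ) else 0

open scoped TensorProduct

noncomputable instance : Zero (SCtot F ⊗[ℂ] SCtot F) :=
  (inferInstance : AddCommMonoid (SCtot F ⊗[ℂ] SCtot F)).toAddMonoid.toZero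

noncomputable instance : Zero ((SCtot F ⊗[ℂ] SCtot F) ⊗[ℂ] SCtot F) :=
  (inferInstance : AddCommMonoid ((SCtot F ⊗[ℂ] SCtot F) ⊗[ℂ] SCtot F)).toAddMonoid.toZero

noncomputable instance : Zero (SCtot F ⊗[ℂ] (SCtot F ⊗[ℂ] SCtot F)) :=
  (inferInstance : AddCommMonoid (SCtot F ⊗[ℂ] (SCtot F ⊗[ℂ] SCtot F))).toAddMonoid.toZero

/-- The coproduct on the `P`-basis:
`Δ(P_λ) = Σ_{A ⊆ [n], λ = λ|_A ⊔ λ|_{Aᶜ}} P_{st_A(λ|_A)} ⊗ P_{st_{Aᶜ}(λ|_{Aᶜ})}`. -/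
def DeltaP (n : ℕ) (lam : Finset (Arc F)) : SCtot F ⊗[ℂ] SCtot F :=
  ∑ A ∈ (Icc 1 (n : ℤ)).powerset,
    if Splits A lam then
      Pelt F A.card (standardize A (restrictTo A lam)) ⊗ₜ[ℂ]
        Pelt F (n - A.card)
          (standardize (Icc 1 (n : ℤ) \ A) (restrictTo (Icc 1 (n : ℤ) \ A) lam))
    else (0 : SCtot F ⊗[ℂ] SCtot F)

/-!
Both iterated coproducts of `P_λ` expand into one sum over ordered pairs of disjoint blocks
`A₁, A₂ ⊆ [n]` (the third block being the rest) such that every arc of `λ` lies inside one block,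
with summand `P_{st(λ|A₁)} ⊗ P_{st(λ|A₂)} ⊗ P_{st(λ|A₃)}`. The point is that standardization is
transitive: restricting `st_A(λ|_A)` to `st_A(A₁)` and standardizing again gives `st_{A₁}(λ|_{A₁})`,
so the splittings of `st_A(λ|_A)` are the splittings `A₁ ⊆ A` of `λ|_A`.
-/

lemma Finset.sum_powerset_sum_powerset_sdiff {α M : Type*} [DecidableEq α] [AddCommMonoid M]
    (I : Finset α) (f : Finset α → Finset α → M) :
    ∑ A ∈ I.powerset, ∑ B ∈ A.powerset, f B (A \ B)
      = ∑ B ∈ I.powerset, ∑ C ∈ (I \ B).powerset, f B C := by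
  rw [sum_sigma', sum_sigma']
  refine sum_bij' (fun p _ => ⟨p.2, p.1 \ p.2⟩) (fun q _ => ⟨q.1 ∪ q.2, q.1⟩) ?_ ?_ ?_ ?_ ?_
  · rintro ⟨A, B⟩ hp
    simp only [mem_sigma, mem_powerset] at hp ⊢
    exact ⟨hp.2.trans hp.1, sdiff_subset_sdiff hp.1 le_rfl⟩
  · rintro ⟨B, C⟩ hq
    simp only [mem_sigma, mem_powerset] at hq ⊢
    exact ⟨union_subset hq.1 (hq.2.trans sdiff_subset), subset_union_left⟩
  · rintro ⟨A, B⟩ hp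
    simp only [mem_sigma, mem_powerset] at hp
    simp [union_sdiff_of_subset hp.2]
  · rintro ⟨B, C⟩ hq
    simp only [mem_sigma, mem_powerset] at hq
    simp [union_sdiff_cancel_left (disjoint_of_subset_right hq.2 disjoint_sdiff)]
  · intros; rfl

section Rank

variable {A A1 : Finset ℤ} {a b : ℤ}

lemma rankIn_lt_rankIn (ha : a ∈ A) (hba : b < a) : rankIn A b < rankIn A a := by
  have hssub : A.filter (· ≤ b) ⊂ A.filter (· ≤ a) :=
    (ssubset_iff_of_subset (monotone_filter_right A fun _ _ hx => hx.trans hba.le)).mpr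
      ⟨a, by simp [ha], by simp [ha, hba]⟩
  unfold rankIn
  exact_mod_cast card_lt_card hssub

lemma rankIn_le_rankIn_iff (ha : a ∈ A) (hb : b ∈ A) : rankIn A a ≤ rankIn A b ↔ a ≤ b :=
  ⟨fun hle => not_lt.mp fun hlt => (rankIn_lt_rankIn ha hlt).not_ge hle,
    fun hab => hab.eq_or_lt.elim (fun h => h ▸ le_rfl) fun h => (rankIn_lt_rankIn hb h).le⟩

lemma rankIn_injOn : Set.InjOn (rankIn A) A := fun _ ha _ hb h =>
  le_antisymm ((rankIn_le_rankIn_iff ha hb).mp h.le) ((rankIn_le_rankIn_iff hb ha).mp h.ge)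

lemma one_le_rankIn (ha : a ∈ A) : 1 ≤ rankIn A a := by
  have : 0 < (A.filter (· ≤ a)).card := card_pos.mpr ⟨a, by simp [ha]⟩
  unfold rankIn
  omega

lemma image_rankIn : A.image (rankIn A) = Icc 1 (A.card : ℤ) := by
  refine eq_of_subset_of_card_le (fun m hm => ?_) ?_
  · obtain ⟨a, ha, rfl⟩ := mem_image.mp hm
    exact mem_Icc.mpr ⟨one_le_rankIn ha, by unfold rankIn; exact_mod_cast card_filter_le _ _⟩
  · rw [card_image_of_injOn rankIn_injOn]
    simp

lemma rankIn_mem_image_rankIn_iff (h1 : A1 ⊆ A) (ha : a ∈ A) :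
    rankIn A a ∈ A1.image (rankIn A) ↔ a ∈ A1 := by
  simpa using rankIn_injOn.mem_image_iff (coe_subset.mpr h1) ha

lemma rankIn_image_rankIn (h1 : A1 ⊆ A) (ha : a ∈ A) :
    rankIn (A1.image (rankIn A)) (rankIn A a) = rankIn A1 a := by
  have hfilter : (A1.image (rankIn A)).filter (· ≤ rankIn A a)
      = (A1.filter (· ≤ a)).image (rankIn A) := by
    rw [filter_image]
    exact congrArg _ (filter_congr fun b hb => rankIn_le_rankIn_iff (h1 hb) ha)
  rw [rankIn, hfilter, card_image_of_injOn (rankIn_injOn.mono fun b hb => h1 (mem_filter.mp hb).1),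
    rankIn]

lemma image_rankIn_sdiff (h1 : A1 ⊆ A) :
    (A \ A1).image (rankIn A) = Icc 1 (A.card : ℤ) \ A1.image (rankIn A) := by
  rw [← image_rankIn, image_sdiff_of_injOn rankIn_injOn h1]

lemma sum_powerset_Icc_card {M : Type*} [AddCommMonoid M] (A : Finset ℤ) (g : Finset ℤ → M) :
    ∑ B ∈ (Icc 1 (A.card : ℤ)).powerset, g B = ∑ A1 ∈ A.powerset, g (A1.image (rankIn A)) := by
  rw [← image_rankIn, powerset_image, sum_image (image_injOn_powerset_of_injOn rankIn_injOn)]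

end Rank

section Standardize

variable {F : Type*} {A A1 : Finset ℤ} {i : ℤ}

lemma abs_stMap : |stMap A i| = rankIn A |i| := by
  unfold stMap
  split_ifs with hi
  · rw [abs_of_pos hi]
    exact abs_of_nonneg (Int.natCast_nonneg _)
  · rw [abs_neg, abs_of_nonpos (not_lt.mp hi)]
    exact abs_of_nonneg (Int.natCast_nonneg _)

lemma stMap_image_rankIn_stMap (h1 : A1 ⊆ A) (hi : |i| ∈ A1) :
    stMap (A1.image (rankIn A)) (stMap A i) = stMap A1 i := by
  by_cases hpos : 0 < i
  · rw [abs_of_pos hpos] at hi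
    have : 0 < rankIn A i := one_le_rankIn (h1 hi)
    simp only [stMap, if_pos hpos, if_pos this, rankIn_image_rankIn h1 (h1 hi)]
  · rw [abs_of_nonpos (not_lt.mp hpos)] at hi
    have : ¬ 0 < -rankIn A (-i) := by have := one_le_rankIn (h1 hi); omega
    simp only [stMap, if_neg hpos, if_neg this, neg_neg, rankIn_image_rankIn h1 (h1 hi)]

lemma restrictTo_image_rankIn_standardize (h1 : A1 ⊆ A) (lam : Finset (Arc F)) :
    restrictTo (A1.image (rankIn A)) (standardize A (restrictTo A lam))
      = standardize A (restrictTo A1 lam) := by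
  unfold restrictTo standardize
  rw [filter_image, filter_filter]
  refine congrArg _ (filter_congr fun t _ => ?_)
  simp only [stArc, abs_stMap]
  constructor
  · rintro ⟨⟨hA1, hA2⟩, hB1, hB2⟩
    exact ⟨(rankIn_mem_image_rankIn_iff h1 hA1).mp hB1, (rankIn_mem_image_rankIn_iff h1 hA2).mp hB2⟩
  · rintro ⟨hB1, hB2⟩
    exact ⟨⟨h1 hB1, h1 hB2⟩, (rankIn_mem_image_rankIn_iff h1 (h1 hB1)).mpr hB1,
      (rankIn_mem_image_rankIn_iff h1 (h1 hB2)).mpr hB2⟩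

lemma standardize_restrictTo_standardize (h1 : A1 ⊆ A) (lam : Finset (Arc F)) :
    standardize (A1.image (rankIn A))
        (restrictTo (A1.image (rankIn A)) (standardize A (restrictTo A lam)))
      = standardize A1 (restrictTo A1 lam) := by
  rw [restrictTo_image_rankIn_standardize h1, standardize, standardize, image_image]
  refine image_congr fun t ht => ?_
  obtain ⟨-, ht1, ht2⟩ := mem_filter.mp ht
  simp only [Function.comp_apply, stArc, stMap_image_rankIn_stMap h1 ht1,
    stMap_image_rankIn_stMap h1 ht2]

lemma splits_restrictTo_iff (lam : Finset (Arc F)) :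
    Splits A1 (restrictTo A lam) ↔
      ∀ t ∈ lam, |t.1| ∈ A → |t.2.1| ∈ A → (|t.1| ∈ A1 ↔ |t.2.1| ∈ A1) := by
  simp [Splits, restrictTo]

lemma splits_image_rankIn_standardize_iff (h1 : A1 ⊆ A) (lam : Finset (Arc F)) :
    Splits (A1.image (rankIn A)) (standardize A (restrictTo A lam)) ↔
      Splits A1 (restrictTo A lam) := by
  simp only [Splits, standardize, forall_mem_image, stArc, abs_stMap]
  refine forall₂_congr fun t ht => ?_
  obtain ⟨-, hA1, hA2⟩ := mem_filter.mp ht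
  rw [rankIn_mem_image_rankIn_iff h1 hA1, rankIn_mem_image_rankIn_iff h1 hA2]

lemma splits_and_splits_restrictTo_iff {I : Finset ℤ} {lam : Finset (Arc F)} (hA1 : A1 ⊆ A)
    (hlam : ∀ t ∈ lam, |t.1| ∈ I ∧ |t.2.1| ∈ I) :
    Splits A lam ∧ Splits A1 (restrictTo A lam) ↔
      Splits A1 lam ∧ Splits (A \ A1) (restrictTo (I \ A1) lam) := by
  rw [splits_restrictTo_iff, splits_restrictTo_iff]
  simp only [Splits, ← forall₂_and]
  refine forall₂_congr fun t ht => ?_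
  have hI := hlam t ht
  have hx := @hA1 |t.1|
  have hy := @hA1 |t.2.1|
  simp only [mem_sdiff]
  tauto

end Standardize

def PeltOn (A : Finset ℤ) (lam : Finset (Arc F)) : SCtot F :=
  Pelt F A.card (standardize A (restrictTo A lam))

lemma PeltOn_image_rankIn {A A1 : Finset ℤ} (h1 : A1 ⊆ A) (lam : Finset (Arc F)) :
    PeltOn F (A1.image (rankIn A)) (standardize A (restrictTo A lam)) = PeltOn F A1 lam := by
  rw [PeltOn, PeltOn, standardize_restrictTo_standardize h1,
    card_image_of_injOn (rankIn_injOn.mono h1)]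

lemma DeltaP_eq_sum_PeltOn (n : ℕ) (lam : Finset (Arc F)) :
    DeltaP F n lam = ∑ A ∈ (Icc 1 (n : ℤ)).powerset,
      if Splits A lam then PeltOn F A lam ⊗ₜ[ℂ] PeltOn F (Icc 1 (n : ℤ) \ A) lam else 0 := by
  refine sum_congr rfl fun A hA => ?_
  rw [PeltOn, PeltOn, card_sdiff_of_subset (mem_powerset.mp hA), Int.card_Icc]
  simp

lemma DeltaP_standardize (A : Finset ℤ) (lam : Finset (Arc F)) :
    DeltaP F A.card (standardize A (restrictTo A lam)) = ∑ A1 ∈ A.powerset,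
      if Splits A1 (restrictTo A lam) then PeltOn F A1 lam ⊗ₜ[ℂ] PeltOn F (A \ A1) lam
      else 0 := by
  rw [DeltaP_eq_sum_PeltOn, sum_powerset_Icc_card]
  refine sum_congr rfl fun A1 hA1 => ?_
  have h1 := mem_powerset.mp hA1
  rw [splits_image_rankIn_standardize_iff h1, ← image_rankIn_sdiff h1, PeltOn_image_rankIn F h1,
    PeltOn_image_rankIn F sdiff_subset]

/-- the coproduct `Δ` is coassociative:
`(Δ ⊗ id) ∘ Δ = (id ⊗ Δ) ∘ Δ` on `SC^D` (stated on the `P`-basis elements, which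
suffices by linearity, with the two sides compared via the associator of tensor
products). -/
theorem DeltaP_coassoc (n : ℕ) (lam : Finset (Arc F)) (h : IsDPartition n lam) :
    (TensorProduct.assoc ℂ (SCtot F) (SCtot F) (SCtot F))
      (∑ A ∈ (Icc 1 (n : ℤ)).powerset,
        if Splits A lam then
          DeltaP F A.card (standardize A (restrictTo A lam)) ⊗ₜ[ℂ]
            Pelt F (n - A.card)
              (standardize (Icc 1 (n : ℤ) \ A) (restrictTo (Icc 1 (n : ℤ) \ A) lam))
        else (0 : (SCtot F ⊗[ℂ] SCtot F) ⊗[ℂ] SCtot F))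
    = ∑ A ∈ (Icc 1 (n : ℤ)).powerset,
        if Splits A lam then
          Pelt F A.card (standardize A (restrictTo A lam)) ⊗ₜ[ℂ]
            DeltaP F (n - A.card)
              (standardize (Icc 1 (n : ℤ) \ A) (restrictTo (Icc 1 (n : ℤ) \ A) lam))
        else (0 : SCtot F ⊗[ℂ] (SCtot F ⊗[ℂ] SCtot F)) := by
  have hlam : ∀ t ∈ lam, |t.1| ∈ Icc 1 (n : ℤ) ∧ |t.2.1| ∈ Icc 1 (n : ℤ) := fun ⟨i, j, a⟩ ht => by
    obtain ⟨hi1, hin, hj1, hjn, -⟩ := h i j a ht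
    exact ⟨mem_Icc.mpr ⟨hi1, hin⟩, mem_Icc.mpr ⟨hj1, hjn⟩⟩
  have hcard : ∀ A ∈ (Icc 1 (n : ℤ)).powerset, n - A.card = (Icc 1 (n : ℤ) \ A).card :=
    fun A hA => by simp [card_sdiff_of_subset (mem_powerset.mp hA)]
  calc _ = ∑ A ∈ (Icc 1 (n : ℤ)).powerset, ∑ A1 ∈ A.powerset,
          if Splits A lam ∧ Splits A1 (restrictTo A lam) then
            PeltOn F A1 lam ⊗ₜ[ℂ] (PeltOn F (A \ A1) lam ⊗ₜ[ℂ] PeltOn F (Icc 1 (n : ℤ) \ A) lam)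
          else 0 := by
        rw [map_sum]
        refine sum_congr rfl fun A hA => ?_
        rw [hcard A hA, DeltaP_standardize, ← PeltOn]
        split_ifs with hsplit <;> simp [TensorProduct.sum_tmul, TensorProduct.ite_tmul, hsplit,
          apply_ite (TensorProduct.assoc ℂ (SCtot F) (SCtot F) (SCtot F))]
    _ = ∑ A1 ∈ (Icc 1 (n : ℤ)).powerset, ∑ A2 ∈ (Icc 1 (n : ℤ) \ A1).powerset,
          if Splits A1 lam ∧ Splits A2 (restrictTo (Icc 1 (n : ℤ) \ A1) lam) then
            PeltOn F A1 lam ⊗ₜ[ℂ]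
              (PeltOn F A2 lam ⊗ₜ[ℂ] PeltOn F ((Icc 1 (n : ℤ) \ A1) \ A2) lam)
          else 0 := by
        rw [← sum_powerset_sum_powerset_sdiff]
        refine sum_congr rfl fun A _ => sum_congr rfl fun A1 hA1 => ?_
        have h1 := mem_powerset.mp hA1
        rw [sdiff_sdiff_left, sup_eq_union, union_sdiff_of_subset h1]
        exact if_congr (splits_and_splits_restrictTo_iff h1 hlam) rfl rfl
    _ = _ := by
        refine sum_congr rfl fun A hA => ?_
        rw [hcard A hA, DeltaP_standardize, ← PeltOn]
        split_ifs with hsplit <;> simp [TensorProduct.tmul_sum, TensorProduct.tmul_ite, hsplit]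
end
end
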